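/- Let γ > 1 and define f(x) := (1/(γ+1))·(2γx − (γ−1))·((γ−1)/(γ+1) + 2/((γ+1)·x))^γ for x > 0. Then f(1) = 1, and for all x > 0 the derivative satisfies f'(x) = (2γ(γ−1)/(γ+1)²)·((γ−1)/(γ+1) + 2/((γ+1)·x))^{γ−1}·(1/x − 1)². Consequently f'(x) > 0 for all x > 0 with x ≠ 1, and f(x) > 1 for all x > 1. -/

import Mathlib

/-!
Write `f = p · v ^ γ`, where `p` and `v` are the pressure and velocity ratios of the shock.
Both equal `1` at `x = 1`, and since `v ^ γ = v ^ (γ - 1) · v`, the product rule gives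
`f' = v ^ (γ - 1) · (p' v + γ p v')`, where the bracket is a rational function of `x` that
collapses to `2γ(γ - 1)/(γ + 1)² · (1/x - 1)²`. Thus `f' > 0` away from `x = 1`, and `f` is
strictly increasing on `[1, ∞)`.
-/

namespace NormalShock

/- The Rankine–Hugoniot ratios across a normal shock, with `x` the upstream Mach number squared:
`pressureRatio = p₂/p₁`, `velocityRatio = u₂/u₁ = ρ₁/ρ₂`, `entropyRatio = (p₂/p₁)(ρ₁/ρ₂)^γ`. -/

noncomputable def pressureRatio (γ x : ℝ) : ℝ :=
  1 / (γ + 1) * (2 * γ * x - (γ - 1))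

noncomputable def velocityRatio (γ x : ℝ) : ℝ :=
  (γ - 1) / (γ + 1) + 2 / ((γ + 1) * x)

noncomputable def entropyRatio (γ x : ℝ) : ℝ :=
  pressureRatio γ x * velocityRatio γ x ^ γ

noncomputable def entropyRatioDeriv (γ x : ℝ) : ℝ :=
  2 * γ * (γ - 1) / (γ + 1) ^ 2 * velocityRatio γ x ^ (γ - 1) * (1 / x - 1) ^ 2

variable {γ x : ℝ}

theorem pressureRatio_one (hγ : γ + 1 ≠ 0) : pressureRatio γ 1 = 1 := by
  unfold pressureRatio
  field_simp
  ring

theorem velocityRatio_one (hγ : γ + 1 ≠ 0) : velocityRatio γ 1 = 1 := by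
  unfold velocityRatio
  field_simp
  ring

theorem entropyRatio_one (hγ : γ + 1 ≠ 0) : entropyRatio γ 1 = 1 := by
  rw [entropyRatio, pressureRatio_one hγ, velocityRatio_one hγ, Real.one_rpow, mul_one]

theorem velocityRatio_pos (hγ : 1 ≤ γ) (hx : 0 < x) : 0 < velocityRatio γ x := by
  unfold velocityRatio
  have hγ₁ : 0 < γ + 1 := by linarith
  exact add_pos_of_nonneg_of_pos (div_nonneg (by linarith) hγ₁.le)
    (div_pos two_pos (mul_pos hγ₁ hx))

theorem hasDerivAt_pressureRatio :
    HasDerivAt (pressureRatio γ) (1 / (γ + 1) * (2 * γ)) x := by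
  have h := (((hasDerivAt_id' x).const_mul (2 * γ)).sub_const (γ - 1)).const_mul (1 / (γ + 1))
  rwa [mul_one] at h

theorem hasDerivAt_velocityRatio (hx : x ≠ 0) :
    HasDerivAt (velocityRatio γ) (2 / (γ + 1) * -(x ^ 2)⁻¹) x := by
  have h := ((hasDerivAt_inv hx).const_mul (2 / (γ + 1))).const_add ((γ - 1) / (γ + 1))
  have hv : velocityRatio γ = fun y => (γ - 1) / (γ + 1) + 2 / (γ + 1) * y⁻¹ := by
    funext y
    rw [velocityRatio, ← div_eq_mul_inv, div_div]
  rwa [hv]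

theorem hasDerivAt_entropyRatio (hγ : γ + 1 ≠ 0) (hx : x ≠ 0) (hv : velocityRatio γ x ≠ 0) :
    HasDerivAt (entropyRatio γ) (entropyRatioDeriv γ x) x := by
  have h := (hasDerivAt_pressureRatio (γ := γ)).mul
    ((hasDerivAt_velocityRatio hx).rpow_const (p := γ) (Or.inl hv))
  refine h.congr_deriv ?_
  have hsplit : velocityRatio γ x ^ γ = velocityRatio γ x ^ (γ - 1) * velocityRatio γ x := by
    rw [← Real.rpow_add_one hv, sub_add_cancel]
  rw [entropyRatioDeriv, hsplit, velocityRatio, pressureRatio]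
  field_simp
  ring

theorem entropyRatioDeriv_pos (hγ : 1 < γ) (hx : 0 < x) (hx₁ : x ≠ 1) :
    0 < entropyRatioDeriv γ x := by
  have hcoeff : 0 < 2 * γ * (γ - 1) / (γ + 1) ^ 2 := by
    apply div_pos <;> nlinarith
  have hsq : 0 < (1 / x - 1) ^ 2 :=
    sq_pos_of_ne_zero (by rwa [one_div, sub_ne_zero, Ne, inv_eq_one])
  exact mul_pos (mul_pos hcoeff (Real.rpow_pos_of_pos (velocityRatio_pos hγ.le hx) _)) hsq

theorem hasDerivAt_entropyRatio_of_pos (hγ : 1 ≤ γ) (hx : 0 < x) :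
    HasDerivAt (entropyRatio γ) (entropyRatioDeriv γ x) x :=
  hasDerivAt_entropyRatio (by linarith) hx.ne' (velocityRatio_pos hγ hx).ne'

theorem deriv_entropyRatio_pos (hγ : 1 < γ) (hx : 0 < x) (hx₁ : x ≠ 1) :
    0 < deriv (entropyRatio γ) x := by
  rw [(hasDerivAt_entropyRatio_of_pos hγ.le hx).deriv]
  exact entropyRatioDeriv_pos hγ hx hx₁

theorem strictMonoOn_entropyRatio (hγ : 1 < γ) : StrictMonoOn (entropyRatio γ) (Set.Ici 1) := by
  refine strictMonoOn_of_deriv_pos (convex_Ici 1) (fun y hy => ?_) fun y hy => ?_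
  · exact (hasDerivAt_entropyRatio_of_pos hγ.le (by linarith [hy.out])).continuousAt
      |>.continuousWithinAt
  · rw [interior_Ici] at hy
    exact deriv_entropyRatio_pos hγ (by linarith [hy.out]) (ne_of_gt hy)

theorem one_lt_entropyRatio (hγ : 1 < γ) (hx : 1 < x) : 1 < entropyRatio γ x := by
  simpa only [entropyRatio_one (by linarith : γ + 1 ≠ 0)] using
    strictMonoOn_entropyRatio hγ Set.self_mem_Ici (Set.mem_Ici.2 hx.le) hx

end NormalShock

open NormalShock in
theorem stmt3 (γ : ℝ) (hγ : 1 < γ) :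
    let f : ℝ → ℝ := fun x => 1 / (γ + 1) * (2 * γ * x - (γ - 1)) *
      ((γ - 1) / (γ + 1) + 2 / ((γ + 1) * x)) ^ γ
    let f' : ℝ → ℝ := fun x => 2 * γ * (γ - 1) / (γ + 1) ^ 2 *
      ((γ - 1) / (γ + 1) + 2 / ((γ + 1) * x)) ^ (γ - 1) * (1 / x - 1) ^ 2
    f 1 = 1 ∧
    (∀ x : ℝ, 0 < x → HasDerivAt f (f' x) x) ∧
    (∀ x : ℝ, 0 < x → x ≠ 1 → 0 < deriv f x) ∧
    (∀ x : ℝ, 1 < x → 1 < f x) := by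
  intro f f'
  change entropyRatio γ 1 = 1 ∧
    (∀ x : ℝ, 0 < x → HasDerivAt (entropyRatio γ) (entropyRatioDeriv γ x) x) ∧
    (∀ x : ℝ, 0 < x → x ≠ 1 → 0 < deriv (entropyRatio γ) x) ∧
    (∀ x : ℝ, 1 < x → 1 < entropyRatio γ x)
  exact ⟨entropyRatio_one (by linarith), fun x hx => hasDerivAt_entropyRatio_of_pos hγ.le hx,
    fun x hx hx₁ => deriv_entropyRatio_pos hγ hx hx₁, fun x hx => one_lt_entropyRatio hγ hx⟩
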